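/- Let N ≥ 1, let B be an abelian group, let f : ℤ^N → B be a function, and let d ∈ ℕ. Then fdeg(f) ≤ d if and only if Δ^n f = 0 for every n ∈ ℕ^N with |n| = d + 1. -/

import Mathlib

/-- The difference operator `Δ_a` sending `f` to `x ↦ f (x + a) - f x`. -/
def disc {A B : Type*} [AddCommGroup A] [AddCommGroup B] (a : A) (f : A → B) : A → B :=
  fun x => f (x + a) - f x

/-- Iterated difference operator `Δ_{a_1} ⋯ Δ_{a_k} f` along a list `[a_1, …, a_k]`. -/
def multiDisc {A B : Type*} [AddCommGroup A] [AddCommGroup B] : List A → (A → B) → (A → B)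
  | [], f => f
  | a :: l, f => disc a (multiDisc l f)

/-- `FdegLE f d` says that the functional degree of `f` is at most `d`, i.e. all
`(d+1)`-fold iterated differences of `f` vanish. -/
def FdegLE {A B : Type*} [AddCommGroup A] [AddCommGroup B] (f : A → B) (d : ℕ) : Prop :=
  ∀ l : List A, l.length = d + 1 → multiDisc l f = 0

/-- The multi-index iterated difference operator `Δ^n = Δ_1^{n_1} ⋯ Δ_N^{n_N}` on
functions `ℤ^N → B`, where `Δ_i = Δ_{e_i}` for the `i`-th standard basis vector. -/
def deltaPow {B : Type*} [AddCommGroup B] {N : ℕ} (n : Fin N → ℕ) (f : (Fin N → ℤ) → B) :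
    (Fin N → ℤ) → B :=
  ((List.ofFn fun i => (disc (Pi.single i (1 : ℤ)))^[n i]).foldr (· ∘ ·) id) f

/-! `Δ^n f` is the iterated difference of `f` along the list `basisList n` of `n_i` copies of each
`e_i`, and every list of basis vectors is a permutation of some `basisList n`; so the condition
says that all `(d+1)`-fold differences along basis vectors vanish. The property
`MultiDiscVanish S k` is preserved by sums, negation and translations `τ_a`, so by
`Δ_{a+b} = Δ_a + τ_a Δ_b` and `Δ_{-a} = -τ_{-a} Δ_a` the `a` for which `Δ_a` maps
`MultiDiscVanish S (k + 1)` into `MultiDiscVanish S k` form a subgroup. It contains `S`; when `S`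
generates `A`, differences along arbitrary elements can thus be peeled off one at a time. -/

section Difference

variable {A B : Type*} [AddCommGroup A] [AddCommGroup B]

theorem disc_comm (a b : A) (f : A → B) : disc a (disc b f) = disc b (disc a f) := by
  funext x; simp only [disc, add_right_comm]; abel

theorem disc_comp_add_right (a b : A) (f : A → B) :
    disc b (f ∘ (· + a)) = disc b f ∘ (· + a) := by
  funext x; simp only [disc, Function.comp, add_right_comm]

theorem disc_zero_left (f : A → B) : disc 0 f = 0 := by
  funext x; simp [disc]

theorem disc_add_left (a b : A) (f : A → B) :
    disc (a + b) f = disc a f + disc b f ∘ (· + a) := by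
  funext x; simp only [disc, Pi.add_apply, Function.comp, add_assoc]; abel

theorem disc_neg_left (a : A) (f : A → B) : disc (-a) f = -(disc a f ∘ (· + -a)) := by
  funext x; simp [disc]

theorem disc_zero (a : A) : disc a (0 : A → B) = 0 := by
  funext x; simp [disc]

theorem disc_add (a : A) (f g : A → B) : disc a (f + g) = disc a f + disc a g := by
  funext x; simp only [disc, Pi.add_apply]; abel

theorem disc_neg (a : A) (f : A → B) : disc a (-f) = -disc a f := by
  funext x; simp only [disc, Pi.neg_apply]; abel

end Difference

section MultiDisc

variable {A B : Type*} [AddCommGroup A] [AddCommGroup B]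

theorem multiDisc_append (l₁ l₂ : List A) (f : A → B) :
    multiDisc (l₁ ++ l₂) f = multiDisc l₁ (multiDisc l₂ f) := by
  induction l₁ with
  | nil => rfl
  | cons a l ih => exact congrArg (disc a) ih

theorem multiDisc_perm {l l' : List A} (h : l.Perm l') (f : A → B) :
    multiDisc l f = multiDisc l' f := by
  induction h with
  | nil => rfl
  | cons a _ ih => exact congrArg (disc a) ih
  | swap a b l => exact disc_comm _ _ _
  | trans _ _ ih₁ ih₂ => rw [ih₁, ih₂]

theorem multiDisc_cons' (a : A) (l : List A) (f : A → B) :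
    multiDisc (a :: l) f = multiDisc l (disc a f) :=
  (multiDisc_perm (List.perm_append_singleton a l).symm f).trans (multiDisc_append l [a] f)

theorem multiDisc_replicate (k : ℕ) (a : A) :
    multiDisc (B := B) (List.replicate k a) = (disc a)^[k] := by
  induction k with
  | zero => rfl
  | succ k ih => funext f; rw [Function.iterate_succ_apply', ← ih]; rfl

theorem multiDisc_flatten (L : List (List A)) :
    multiDisc (B := B) L.flatten = (L.map multiDisc).foldr (· ∘ ·) id := by
  induction L with
  | nil => rfl
  | cons l L ih => funext f; simp only [List.flatten_cons, multiDisc_append, ih]; rfl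

theorem multiDisc_comp_add_right (l : List A) (a : A) (f : A → B) :
    multiDisc l (f ∘ (· + a)) = multiDisc l f ∘ (· + a) := by
  induction l with
  | nil => rfl
  | cons b l ih => exact (congrArg (disc b) ih).trans (disc_comp_add_right a b _)

theorem multiDisc_zero (l : List A) : multiDisc l (0 : A → B) = 0 := by
  induction l with
  | nil => rfl
  | cons a l ih => exact (congrArg (disc a) ih).trans (disc_zero a)

theorem multiDisc_add (l : List A) (f g : A → B) :
    multiDisc l (f + g) = multiDisc l f + multiDisc l g := by
  induction l with
  | nil => rfl
  | cons a l ih => exact (congrArg (disc a) ih).trans (disc_add a _ _)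

theorem multiDisc_neg (l : List A) (f : A → B) : multiDisc l (-f) = -multiDisc l f := by
  induction l with
  | nil => rfl
  | cons a l ih => exact (congrArg (disc a) ih).trans (disc_neg a _)

end MultiDisc

section Generators

variable {A B : Type*} [AddCommGroup A] [AddCommGroup B]

def MultiDiscVanish (S : Set A) (k : ℕ) (g : A → B) : Prop :=
  ∀ l : List A, (∀ a ∈ l, a ∈ S) → l.length = k → multiDisc l g = 0

theorem MultiDiscVanish.disc {S : Set A} {k : ℕ} {g : A → B} (hg : MultiDiscVanish S (k + 1) g)
    {a : A} (ha : a ∈ AddSubgroup.closure S) : MultiDiscVanish S k (disc a g) := by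
  induction ha using AddSubgroup.closure_induction generalizing g with
  | mem a ha =>
    intro l hl hlen
    rw [← multiDisc_cons', multiDisc_perm (List.perm_append_singleton a l).symm]
    exact hg _ (by simpa [or_comm] using ⟨ha, hl⟩) (by simp [hlen])
  | zero =>
    intro l _ _
    rw [disc_zero_left, multiDisc_zero]
  | add a b _ _ iha ihb =>
    intro l hl hlen
    rw [disc_add_left, multiDisc_add, multiDisc_comp_add_right, iha hg l hl hlen,
      ihb hg l hl hlen, Pi.zero_comp, add_zero]
  | neg a _ iha =>
    intro l hl hlen
    rw [disc_neg_left, multiDisc_neg, multiDisc_comp_add_right, iha hg l hl hlen, Pi.zero_comp,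
      neg_zero]

theorem MultiDiscVanish.fdegLE {S : Set A} (hS : AddSubgroup.closure S = ⊤) {f : A → B}
    {d : ℕ} (hf : MultiDiscVanish S (d + 1) f) : FdegLE f d := by
  suffices ∀ (l : List A) (k : ℕ) (g : A → B), MultiDiscVanish S k g → l.length = k →
      multiDisc l g = 0 from fun l hl => this l _ f hf hl
  intro l
  induction l with
  | nil => intro k g hg hk; exact hg [] (by simp) hk
  | cons a l ih =>
    rintro (_ | k) g hg hk
    · simp at hk
    · rw [multiDisc_cons']
      exact ih k _ (hg.disc (hS ▸ AddSubgroup.mem_top a)) (by simpa using hk)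

end Generators

section Lattice

variable {N : ℕ}

def basisList (n : Fin N → ℕ) : List (Fin N → ℤ) :=
  (List.ofFn fun i => List.replicate (n i) (Pi.single i 1)).flatten

theorem deltaPow_eq_multiDisc {B : Type*} [AddCommGroup B] (n : Fin N → ℕ)
    (f : (Fin N → ℤ) → B) : deltaPow n f = multiDisc (basisList n) f := by
  simp only [deltaPow, basisList, multiDisc_flatten, List.map_ofFn, Function.comp_def,
    multiDisc_replicate]

theorem length_basisList (n : Fin N → ℕ) : (basisList n).length = ∑ i, n i := by
  simp [basisList, List.length_flatten, List.map_ofFn, Function.comp_def, List.sum_ofFn]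

theorem coe_basisList (n : Fin N → ℕ) :
    (basisList n : Multiset (Fin N → ℤ)) = ∑ i, Multiset.replicate (n i) (Pi.single i 1) := by
  rw [basisList, ← Multiset.coe_join, Multiset.join, List.map_ofFn, ← List.sum_ofFn]
  rfl

theorem basisList_add_single_perm (n : Fin N → ℕ) (i : Fin N) :
    (basisList (n + Pi.single i 1)).Perm (Pi.single i 1 :: basisList n) := by
  rw [← Multiset.coe_eq_coe, ← Multiset.cons_coe, coe_basisList, coe_basisList]
  simp only [Pi.add_apply, Multiset.replicate_add, Finset.sum_add_distrib]
  have hsingle : ∑ j, Multiset.replicate ((Pi.single i 1 : Fin N → ℕ) j)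
      (Pi.single j 1 : Fin N → ℤ) = {Pi.single i 1} := by
    rw [Finset.sum_eq_single i (fun j _ hj => by simp [Pi.single_eq_of_ne hj]) (by simp),
      Pi.single_eq_same, Multiset.replicate_one]
  rw [hsingle, add_comm, Multiset.singleton_add]

theorem exists_basisList_perm {l : List (Fin N → ℤ)}
    (hl : ∀ a ∈ l, a ∈ Set.range fun i => Pi.single i 1) : ∃ n, (basisList n).Perm l := by
  induction l with
  | nil => exact ⟨0, by simp [basisList]⟩
  | cons a l ih =>
    obtain ⟨⟨i, rfl⟩, hl'⟩ := List.forall_mem_cons.mp hl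
    obtain ⟨n, hn⟩ := ih hl'
    exact ⟨n + Pi.single i 1, (basisList_add_single_perm n i).trans (hn.cons _)⟩

theorem closure_range_single_eq_top :
    AddSubgroup.closure (Set.range fun i : Fin N => (Pi.single i 1 : Fin N → ℤ)) = ⊤ := by
  have h : ⇑(Pi.basisFun ℤ (Fin N)) = fun i => Pi.single i 1 := funext (Pi.basisFun_apply ℤ _)
  rw [← Submodule.span_int_eq_addSubgroupClosure, ← h, (Pi.basisFun ℤ (Fin N)).span_eq,
    Submodule.top_toAddSubgroup]

end Lattice

theorem fdegLE_iff_deltaPow_eq_zero_general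
    (N : ℕ) {B : Type*} [AddCommGroup B]
    (f : (Fin N → ℤ) → B) (d : ℕ) :
    FdegLE f d ↔ ∀ n : Fin N → ℕ, (∑ i, n i) = d + 1 → deltaPow n f = 0 := by
  refine ⟨fun hf n hn => ?_, fun hf => MultiDiscVanish.fdegLE closure_range_single_eq_top ?_⟩
  · rw [deltaPow_eq_multiDisc]
    exact hf _ (by rw [length_basisList, hn])
  · intro l hl hlen
    obtain ⟨n, hn⟩ := exists_basisList_perm hl
    rw [← multiDisc_perm hn, ← deltaPow_eq_multiDisc]
    exact hf n (by rw [← length_basisList, hn.length_eq, hlen])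

/-- For a function `f : ℤ^N → B`, the functional degree of `f` is at most `d` if and only
if `Δ^n f = 0` for every multi-index `n ∈ ℕ^N` with `|n| = d + 1`. -/
theorem fdegLE_iff_deltaPow_eq_zero
    (N : ℕ) (hN : 1 ≤ N) {B : Type*} [AddCommGroup B]
    (f : (Fin N → ℤ) → B) (d : ℕ) :
    FdegLE f d ↔ ∀ n : Fin N → ℕ, (∑ i, n i) = d + 1 → deltaPow n f = 0 :=
  fdegLE_iff_deltaPow_eq_zero_general N f d
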